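/- Let 0 → A → B → C → 0 be a short exact sequence of R-modules. If B is u-S-semisimple, then A and C are u-S-semisimple. -/

import Mathlib

/-! `M` is `u`-`S`-semisimple exactly when every injection `L ↪ M` has a retraction up to a
factor `s ∈ S` (take the cokernel as third term), and such retractions restrict to submodules.
For a quotient `g : B → C`, a retraction `r` of `ker g ↪ B` gives a section `σ` of `g` up to
`t ∈ S` by factoring `t • id - r` through `g`; a retraction of `L ↪ C` is then `g ∘ r' ∘ σ`,
where `r'` retracts `g⁻¹(L) ↪ B`. -/

universe u

/-- `M` is `u`-`S`-semisimple: every short exact sequence with middle term `M` is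
`u`-`S`-split. -/
def IsUSSemisimple {R : Type u} [CommRing R] (S : Submonoid R)
    (M : Type u) [AddCommGroup M] [Module R M] : Prop :=
  ∀ (L N : Type u) [AddCommGroup L] [Module R L] [AddCommGroup N] [Module R N]
    (f : L →ₗ[R] M) (g : M →ₗ[R] N),
    Function.Injective f → Function.Surjective g →
    LinearMap.range f = LinearMap.ker g →
    ∃ s ∈ S, ∃ f' : M →ₗ[R] L, ∀ a : L, f' (f a) = s • a

section

variable {R : Type*} [CommRing R] {L M N : Type*} [AddCommGroup L] [Module R L]
  [AddCommGroup M] [Module R M] [AddCommGroup N] [Module R N]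

theorem exists_section_of_retraction {f : L →ₗ[R] M} {g : M →ₗ[R] N}
    (hg : Function.Surjective g) (hfg : LinearMap.range f = LinearMap.ker g)
    {s : R} {r : M →ₗ[R] L} (hr : ∀ a, r (f a) = s • a) :
    ∃ σ : N →ₗ[R] M, ∀ c, g (σ c) = s • c := by
  set φ : M →ₗ[R] M := s • LinearMap.id - f ∘ₗ r
  have hφ : LinearMap.ker g ≤ LinearMap.ker φ := by
    rintro _ hx
    obtain ⟨a, rfl⟩ := hfg ▸ hx
    simp [φ, hr]
  have hgf : ∀ b, g (f b) = 0 := fun b =>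
    LinearMap.mem_ker.mp (hfg ▸ LinearMap.mem_range_self f b)
  refine ⟨(LinearMap.ker g).liftQ φ hφ ∘ₗ (g.quotKerEquivOfSurjective hg).symm.toLinearMap,
    fun c => ?_⟩
  obtain ⟨b, rfl⟩ := hg c
  simp [φ, hgf]

end

namespace IsUSSemisimple

variable {R : Type u} [CommRing R] {S : Submonoid R} {M : Type u} [AddCommGroup M] [Module R M]

theorem exists_retraction (hM : IsUSSemisimple S M) {L : Type u} [AddCommGroup L] [Module R L]
    {i : L →ₗ[R] M} (hi : Function.Injective i) :
    ∃ s ∈ S, ∃ r : M →ₗ[R] L, ∀ a, r (i a) = s • a :=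
  hM L (M ⧸ LinearMap.range i) i (LinearMap.range i).mkQ hi (LinearMap.range i).mkQ_surjective
    (Submodule.ker_mkQ _).symm

theorem of_forall_exists_retraction
    (h : ∀ (L : Type u) [AddCommGroup L] [Module R L] (i : L →ₗ[R] M), Function.Injective i →
      ∃ s ∈ S, ∃ r : M →ₗ[R] L, ∀ a, r (i a) = s • a) :
    IsUSSemisimple S M :=
  fun L _ _ _ _ _ i _ hi _ _ => h L i hi

theorem exists_section (hM : IsUSSemisimple S M) {N : Type u} [AddCommGroup N] [Module R N]
    {g : M →ₗ[R] N} (hg : Function.Surjective g) :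
    ∃ t ∈ S, ∃ σ : N →ₗ[R] M, ∀ c, g (σ c) = t • c := by
  obtain ⟨t, ht, r, hr⟩ := hM.exists_retraction (LinearMap.ker g).injective_subtype
  exact ⟨t, ht, exists_section_of_retraction hg (Submodule.range_subtype _) hr⟩

theorem of_injective (hM : IsUSSemisimple S M) {A : Type u} [AddCommGroup A] [Module R A]
    {f : A →ₗ[R] M} (hf : Function.Injective f) : IsUSSemisimple S A := by
  refine of_forall_exists_retraction fun L _ _ i hi => ?_
  obtain ⟨s, hs, r, hr⟩ := hM.exists_retraction (i := f ∘ₗ i) (hf.comp hi)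
  exact ⟨s, hs, r ∘ₗ f, hr⟩

theorem of_surjective (hM : IsUSSemisimple S M) {C : Type u} [AddCommGroup C] [Module R C]
    {g : M →ₗ[R] C} (hg : Function.Surjective g) : IsUSSemisimple S C := by
  refine of_forall_exists_retraction fun L _ _ h hh => ?_
  obtain ⟨t, ht, σ, hσ⟩ := hM.exists_section hg
  set K := (LinearMap.range h).comap g
  obtain ⟨u, hu, r, hr⟩ := hM.exists_retraction K.injective_subtype
  set eh := LinearEquiv.ofInjective h hh
  let gK : K →ₗ[R] LinearMap.range h := g.restrict fun _ hx => hx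
  refine ⟨u * t, S.mul_mem hu ht, eh.symm.toLinearMap ∘ₗ gK ∘ₗ r ∘ₗ σ, fun a => ?_⟩
  have hσa : g (σ (h a)) = eh (t • a) := by simp [eh, hσ]
  have hσK : σ (h a) ∈ K := ⟨t • a, by simp [hσ]⟩
  calc eh.symm (gK (r (σ (h a)))) = eh.symm (u • gK ⟨σ (h a), hσK⟩) := by
        rw [← map_smul, ← hr]; rfl
    _ = eh.symm (u • eh (t • a)) := by congr 2; exact Subtype.ext hσa
    _ = (u * t) • a := by simp [smul_smul]

end IsUSSemisimple

theorem uS_semisimple_of_sub_and_quotient_general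
    {R : Type u} [CommRing R] (S : Submonoid R)
    {A B C : Type u} [AddCommGroup A] [Module R A] [AddCommGroup B] [Module R B]
    [AddCommGroup C] [Module R C]
    (f : A →ₗ[R] B) (g : B →ₗ[R] C)
    (hf : Function.Injective f) (hg : Function.Surjective g)
    (hB : IsUSSemisimple S B) :
    IsUSSemisimple S A ∧ IsUSSemisimple S C :=
  ⟨hB.of_injective hf, hB.of_surjective hg⟩

/-- in a short exact sequence `0 → A → B → C → 0`, if `B` is
`u`-`S`-semisimple then so are `A` and `C`. -/
theorem uS_semisimple_of_sub_and_quotient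
    {R : Type u} [CommRing R] (S : Submonoid R)
    {A B C : Type u} [AddCommGroup A] [Module R A] [AddCommGroup B] [Module R B]
    [AddCommGroup C] [Module R C]
    (f : A →ₗ[R] B) (g : B →ₗ[R] C)
    (hf : Function.Injective f) (hg : Function.Surjective g)
    (hfg : LinearMap.range f = LinearMap.ker g)
    (hB : IsUSSemisimple S B) :
    IsUSSemisimple S A ∧ IsUSSemisimple S C :=
  uS_semisimple_of_sub_and_quotient_general S f g hf hg hB
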